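/- arXiv:1211.4175 — 8 statements merged into one kernel-verified Lean document; each statement's English description precedes it below -/
import Mathlib

section
/- Let (X,d) be a symmetric space where d is triangular (and nonnegative). Let (x_n; n≥0) be a sequence in X that is 0d-semi-Cauchy (i.e., d(x_n,x_{n+1}) → 0 as n → ∞) but not 0d-Cauchy, and let Q be a countable subset of (0,∞). Then there exist ε ∈ (0,∞)\Q, an index j(ε) ∈ ℕ, and rank sequences (m(j); j≥0), (n(j); j≥0) in ℕ such that: (i) j ≤ m(j) < n(j) and d(x_{m(j)}, x_{n(j)}) ≥ ε for all j ≥ 0; (ii) n(j) − m(j) ≥ 2 and d(x_{m(j)}, x_{n(j)−1}) < ε for all j ≥ j(ε); (iii) lim_{j→∞} d(x_{m(j)+p}, x_{n(j)+q}) = ε for every p, q ∈ {0,1}. -/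
open Filter Set Topology

theorem stmt_0 {X : Type*}
    (d : X → X → ℝ)
    (hnn : ∀ x y, 0 ≤ d x y)
    (hsym : ∀ x y, d x y = d y x)
    (htri : ∀ x y z, d x z ≤ d x y + d y z)
    (x : ℕ → X)
    (hsemi : Filter.Tendsto (fun n => d (x n) (x (n + 1))) Filter.atTop (nhds 0))
    (hnotCauchy : ¬ (∀ ε > 0, ∃ j : ℕ, ∀ m n : ℕ, j ≤ m → m < n → d (x m) (x n) < ε))
    (Q : Set ℝ) (hQc : Q.Countable) (hQs : Q ⊆ Set.Ioi 0) :
    ∃ ε : ℝ, 0 < ε ∧ ε ∉ Q ∧ ∃ J : ℕ, ∃ m n : ℕ → ℕ,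
      (∀ j : ℕ, j ≤ m j ∧ m j < n j ∧ ε ≤ d (x (m j)) (x (n j))) ∧
      (∀ j : ℕ, J ≤ j → m j + 2 ≤ n j ∧ d (x (m j)) (x (n j - 1)) < ε) ∧
      (∀ p q : ℕ, p ≤ 1 → q ≤ 1 →
        Filter.Tendsto (fun j => d (x (m j + p)) (x (n j + q))) Filter.atTop (nhds ε)) := by
  classical
  push_neg at hnotCauchy
  obtain ⟨ε₀, hε₀, h0⟩ := hnotCauchy
  -- choose ε ∈ (0, ε₀) \ Q
  have hunc : ¬ (Set.Ioo (0:ℝ) ε₀).Countable := fun h =>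
    absurd (Cardinal.mk_Ioo_real hε₀ ▸ h.le_aleph0)
      (not_le.mpr Cardinal.aleph0_lt_continuum)
  obtain ⟨ε, hεI, hεQ⟩ := Set.diff_nonempty.mpr (fun hsub => hunc (hQc.mono hsub))
  obtain ⟨hε, hεε₀⟩ := hεI
  refine ⟨ε, hε, hεQ, ?_⟩
  choose m n' hm hmn' hd' using h0
  have hex : ∀ j, ∃ k, m j < k ∧ ε ≤ d (x (m j)) (x k) :=
    fun j => ⟨n' j, hmn' j, le_trans hεε₀.le (hd' j)⟩
  set n : ℕ → ℕ := fun j => Nat.find (hex j) with hn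
  have hspec : ∀ j, m j < n j ∧ ε ≤ d (x (m j)) (x (n j)) := fun j => Nat.find_spec (hex j)
  have hmin : ∀ j k, k < n j → ¬(m j < k ∧ ε ≤ d (x (m j)) (x k)) :=
    fun j k hk => Nat.find_min (hex j) hk
  -- find J
  obtain ⟨J, hJ⟩ := Filter.eventually_atTop.mp (hsemi.eventually (gt_mem_nhds hε))
  refine ⟨J, m, n, fun j => ⟨hm j, (hspec j).1, (hspec j).2⟩, ?_, ?_⟩
  · -- part (ii)
    intro j hj
    have h2 : m j + 2 ≤ n j := by
      rcases Nat.lt_or_ge (n j) (m j + 2) with h | h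
      · have h1 := (hspec j).1
        have hne : n j = m j + 1 := by omega
        have hlt := hJ (m j) (le_trans hj (hm j))
        have h2 := (hspec j).2
        rw [hne] at h2
        exact absurd h2 (not_le.mpr hlt)
      · exact h
    refine ⟨h2, ?_⟩
    have hk : n j - 1 < n j := by omega
    have := hmin j (n j - 1) hk
    push_neg at this
    exact this (by omega)
  · -- part (iii)
    have hma : Filter.Tendsto m Filter.atTop Filter.atTop :=
      tendsto_atTop_mono hm tendsto_id
    have hna : Filter.Tendsto n Filter.atTop Filter.atTop :=
      tendsto_atTop_mono (fun j => le_of_lt (lt_of_le_of_lt (hm j) (hspec j).1)) tendsto_id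
    have ha : Filter.Tendsto (fun j => d (x (m j)) (x (m j + 1))) Filter.atTop (nhds 0) :=
      hsemi.comp hma
    have hb : Filter.Tendsto (fun j => d (x (n j)) (x (n j + 1))) Filter.atTop (nhds 0) :=
      hsemi.comp hna
    have hn1 : Filter.Tendsto (fun j => n j - 1) Filter.atTop Filter.atTop :=
      tendsto_atTop_mono (fun j => by simp only [id_eq]; have := (hspec j).1; have := hm j; omega) tendsto_id
    have hc : Filter.Tendsto (fun j => d (x (n j - 1)) (x (n j))) Filter.atTop (nhds 0) := by
      have := hsemi.comp hn1
      refine this.congr (fun j => ?_)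
      have h1 : n j - 1 + 1 = n j := by have := (hspec j).1; omega
      simp only [Function.comp, h1]
    -- main limit
    have L0 : Filter.Tendsto (fun j => d (x (m j)) (x (n j))) Filter.atTop (nhds ε) := by
      refine tendsto_of_tendsto_of_tendsto_of_le_of_le'
        (tendsto_const_nhds : Filter.Tendsto (fun _ : ℕ => ε) _ _)
        (by simpa using (tendsto_const_nhds.add hc :
          Filter.Tendsto (fun j => ε + d (x (n j - 1)) (x (n j))) Filter.atTop (nhds (ε + 0))))
        (Filter.Eventually.of_forall fun j => (hspec j).2) ?_
      refine Filter.eventually_atTop.mpr ⟨J, fun j hj => ?_⟩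
      have h2 : m j + 2 ≤ n j := by
        rcases Nat.lt_or_ge (n j) (m j + 2) with h | h
        · have hne : n j = m j + 1 := by have := (hspec j).1; omega
          have hlt := hJ (m j) (le_trans hj (hm j))
          have h2 := (hspec j).2
          rw [hne] at h2
          exact absurd h2 (not_le.mpr hlt)
        · exact h
      have hlt : d (x (m j)) (x (n j - 1)) < ε := by
        have := hmin j (n j - 1) (by omega)
        push_neg at this
        exact this (by omega)
      calc d (x (m j)) (x (n j)) ≤ d (x (m j)) (x (n j - 1)) + d (x (n j - 1)) (x (n j)) :=
            htri _ _ _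
        _ ≤ ε + d (x (n j - 1)) (x (n j)) := by linarith
    intro p q hp hq
    have key : ∀ p q : ℕ, p ≤ 1 → q ≤ 1 → ∀ j,
        d (x (m j)) (x (n j)) - (d (x (m j)) (x (m j + 1)) + d (x (n j)) (x (n j + 1)))
          ≤ d (x (m j + p)) (x (n j + q)) ∧
        d (x (m j + p)) (x (n j + q))
          ≤ d (x (m j)) (x (n j)) + (d (x (m j)) (x (m j + 1)) + d (x (n j)) (x (n j + 1))) := by
      intro p q hp hq j
      interval_cases p <;> interval_cases q <;>
        constructor <;>
        (try simp only [add_zero]) <;>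
        nlinarith [htri (x (m j)) (x (m j + 1)) (x (n j)),
          htri (x (m j)) (x (m j + 1)) (x (n j + 1)),
          htri (x (m j + 1)) (x (m j)) (x (n j)),
          htri (x (m j + 1)) (x (m j)) (x (n j + 1)),
          htri (x (m j)) (x (n j)) (x (n j + 1)),
          htri (x (m j)) (x (n j + 1)) (x (n j)),
          htri (x (m j + 1)) (x (n j)) (x (n j + 1)),
          htri (x (m j + 1)) (x (n j + 1)) (x (n j)),
          hsym (x (m j)) (x (m j + 1)),
          hsym (x (n j)) (x (n j + 1)),
          hnn (x (m j)) (x (m j + 1)),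
          hnn (x (n j)) (x (n j + 1))]
    refine tendsto_of_tendsto_of_tendsto_of_le_of_le
      (g := fun j => d (x (m j)) (x (n j)) -
        (d (x (m j)) (x (m j + 1)) + d (x (n j)) (x (n j + 1))))
      (h := fun j => d (x (m j)) (x (n j)) +
        (d (x (m j)) (x (m j + 1)) + d (x (n j)) (x (n j + 1))))
      (by simpa using L0.sub (ha.add hb)) (by simpa using L0.add (ha.add hb))
      (fun j => by exact (key p q hp hq j).1) (fun j => by exact (key p q hp hq j).2)
end

section
/- Let (X,d) be a symmetric space where d is triangular and (X,d) is 0-complete, and let T : X → X be d-asymptotic. Suppose T is (d,M1;φ)-contractive, i.e. d(Tx,Ty) ≤ φ(d(x,y)) for all x,y ∈ X, for some nearly right admissible normal function φ : [0,∞) → [0,∞). Then T is a global Picard operator (modulo d): for every x ∈ X the sequence (T^n x) 0d-converges and each of its 0d-limits z satisfies d(z,Tz) = 0; moreover Fix(T;d) := {z ∈ X : d(z,Tz) = 0} is a d-singleton. -/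
open Filter Set Topology

theorem stmt_7 {X : Type*}
    (d : X → X → ℝ)
    (hnn : ∀ x y, 0 ≤ d x y)
    (hsym : ∀ x y, d x y = d y x)
    (htri : ∀ x y z, d x z ≤ d x y + d y z)
    (hcomp : ∀ x : ℕ → X,
      (∀ ε > 0, ∃ j : ℕ, ∀ m n : ℕ, j ≤ m → m < n → d (x m) (x n) < ε) →
      ∃ z : X, Filter.Tendsto (fun n => d (x n) z) Filter.atTop (nhds 0))
    (T : X → X)
    (hasym : ∀ x : X, Filter.Tendsto (fun n => d (T^[n] x) (T^[n + 1] x))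
      Filter.atTop (nhds 0))
    (φ : ℝ → ℝ)
    (hφnn : ∀ t : ℝ, 0 ≤ t → 0 ≤ φ t)
    (hφ0 : φ 0 = 0)
    (hφlt : ∀ t : ℝ, 0 < t → φ t < t)
    (hadm : ∃ Q : Set ℝ, Q.Countable ∧ ∀ s : ℝ, 0 < s → s ∉ Q →
      max (Filter.limsup φ (nhdsWithin s (Set.Ioi s))) (φ s) < s)
    (hcontr : ∀ x y, d (T x) (T y) ≤ φ (d x y))
    :
    (∀ x : X, ∃ z : X, Filter.Tendsto (fun n => d (T^[n] x) z) Filter.atTop (nhds 0)) ∧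
    (∀ x z : X, Filter.Tendsto (fun n => d (T^[n] x) z) Filter.atTop (nhds 0) →
      d z (T z) = 0) ∧
    (∀ z₁ z₂ : X, d z₁ (T z₁) = 0 → d z₂ (T z₂) = 0 → d z₁ z₂ = 0) := by
  classical
  obtain ⟨Q, hQc, hQ⟩ := hadm
  have hφle : ∀ t : ℝ, 0 ≤ t → φ t ≤ t := by
    intro t ht
    rcases ht.eq_or_lt with h | h
    · simp [← h, hφ0]
    · exact (hφlt t h).le
  -- orbits are 0d-Cauchy
  have key : ∀ x : X, ∀ ε : ℝ, 0 < ε → ∃ j : ℕ, ∀ m n : ℕ, j ≤ m → m < n →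
      d (T^[m] x) (T^[n] x) < ε := by
    intro x ε hε
    by_contra hcon
    push_neg at hcon
    -- pick ε' ∈ (0, ε) outside Q
    obtain ⟨ε', hε'Q, hε'1, hε'2⟩ : ∃ ε', ε' ∉ Q ∧ 0 < ε' ∧ ε' < ε := by
      have hd : Dense Qᶜ := hQc.dense_compl ℝ
      obtain ⟨t, htQ, htI⟩ := hd.exists_mem_open isOpen_Ioo (Set.nonempty_Ioo.2 hε)
      exact ⟨t, htQ, htI.1, htI.2⟩
    have hmax : max (Filter.limsup φ (nhdsWithin ε' (Set.Ioi ε'))) (φ ε') < ε' :=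
      hQ ε' hε'1 hε'Q
    set L := Filter.limsup φ (nhdsWithin ε' (Set.Ioi ε')) with hLdef
    set r : ℝ := (max L (φ ε') + ε') / 2 with hrdef
    have hLr : L < r := by
      have h1 := le_max_left L (φ ε'); rw [hrdef]; linarith [hmax]
    have hφε'r : φ ε' < r := by
      have h1 := le_max_right L (φ ε'); rw [hrdef]; linarith [hmax]
    have hrε : r < ε' := by rw [hrdef]; linarith [hmax]
    have hr0 : 0 < r := by
      have h0 : 0 ≤ φ ε' := hφnn ε' hε'1.le
      have h1 := le_max_right L (φ ε')
      rw [hrdef]; linarith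
    have hbdd : Filter.IsBoundedUnder (· ≤ ·) (nhdsWithin ε' (Set.Ioi ε')) φ := by
      refine ⟨ε' + 1, Filter.eventually_map.2 ?_⟩
      have hmem : Set.Ioo ε' (ε' + 1) ∈ nhdsWithin ε' (Set.Ioi ε') :=
        Ioo_mem_nhdsGT_of_mem ⟨le_refl ε', by linarith⟩
      filter_upwards [hmem] with t ht
      have : φ t ≤ t := hφle t (by linarith [ht.1])
      linarith [ht.2]
    have hev : ∀ᶠ t in nhdsWithin ε' (Set.Ioi ε'), φ t < r :=
      Filter.eventually_lt_of_limsup_lt hLr hbdd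
    obtain ⟨u, huε, hu⟩ := (nhdsGT_basis ε').eventually_iff.mp hev
    set δ : ℝ := min (u - ε') ((ε' - r) / 2) with hδdef
    have hδ0 : 0 < δ := lt_min (by linarith) (by linarith)
    have hδ1 : δ ≤ u - ε' := min_le_left _ _
    have hδ2 : δ ≤ (ε' - r) / 2 := min_le_right _ _
    obtain ⟨J, hJ⟩ := (Filter.eventually_atTop).mp ((hasym x).eventually_lt_const hδ0)
    obtain ⟨m, n1, hJm, hmn1, hεd⟩ := hcon J
    have hex : ∃ k, m < k ∧ ε' ≤ d (T^[m] x) (T^[k] x) :=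
      ⟨n1, hmn1, le_trans hε'2.le hεd⟩
    obtain ⟨n, hn⟩ : ∃ n, Nat.find hex = n := ⟨_, rfl⟩
    have hmn : m < n := hn ▸ (Nat.find_spec hex).1
    have hεn : ε' ≤ d (T^[m] x) (T^[n] x) := hn ▸ (Nat.find_spec hex).2
    have hmin : ∀ k, k < n → ¬(m < k ∧ ε' ≤ d (T^[m] x) (T^[k] x)) := by
      intro k hk
      exact Nat.find_min hex (hn ▸ hk)
    rcases eq_or_lt_of_le (Nat.succ_le_of_lt hmn) with hcase | hcase
    · -- n = m + 1 : contradiction since step lengths are < δ < ε'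
      have hcase' : n = m + 1 := by omega
      subst hcase'
      have h1 : d (T^[m] x) (T^[m + 1] x) < δ := hJ m hJm
      linarith [hεn]
    · -- n ≥ m + 2
      obtain ⟨p, hp⟩ : ∃ p, n = p + 1 := ⟨n - 1, by omega⟩
      subst hp
      have hmp : m < p := by omega
      have hpJ : J ≤ p := by omega
      have hnotp : ¬(m < p ∧ ε' ≤ d (T^[m] x) (T^[p] x)) := hmin p (by omega)
      have hdp : d (T^[m] x) (T^[p] x) < ε' := by
        by_contra h
        exact hnotp ⟨hmp, le_of_not_gt h⟩
      have hap : d (T^[p] x) (T^[p + 1] x) < δ := hJ p hpJ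
      have ham : d (T^[m] x) (T^[m + 1] x) < δ := hJ m hJm
      have han : d (T^[p + 1] x) (T^[p + 1 + 1] x) < δ := hJ (p + 1) (by omega)
      set b := d (T^[m] x) (T^[p + 1] x) with hbdef
      have hbu : b < u := by
        have := htri (T^[m] x) (T^[p] x) (T^[p + 1] x)
        rw [hbdef]; linarith
      have hφb : φ b < r := by
        rcases hεn.eq_or_lt with h | h
        · rw [← h]; exact hφε'r
        · exact hu ⟨h, hbu⟩
      have hstep : d (T^[m + 1] x) (T^[p + 1 + 1] x) ≤ φ b := by
        have h1 : T^[m + 1] x = T (T^[m] x) := Function.iterate_succ_apply' T m x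
        have h2 : T^[p + 1 + 1] x = T (T^[p + 1] x) := Function.iterate_succ_apply' T (p + 1) x
        rw [h1, h2]
        exact hcontr _ _
      have hchain : b ≤ d (T^[m] x) (T^[m + 1] x) + d (T^[m + 1] x) (T^[p + 1 + 1] x)
          + d (T^[p + 1 + 1] x) (T^[p + 1] x) := by
        have h1 := htri (T^[m] x) (T^[m + 1] x) (T^[p + 1] x)
        have h2 := htri (T^[m + 1] x) (T^[p + 1 + 1] x) (T^[p + 1] x)
        rw [hbdef]; linarith
      have hflip : d (T^[p + 1 + 1] x) (T^[p + 1] x) < δ := by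
        rw [hsym]; exact han
      -- combine: ε' ≤ b ≤ δ + r + δ ≤ ε' - r + r = ε', with strict inequalities
      linarith [hεn, hchain, hstep, hφb, ham, hflip]
  refine ⟨fun x => hcomp (fun n => T^[n] x) (fun ε hε => key x ε hε), ?_, ?_⟩
  · intro x z hz
    have hz1 : Filter.Tendsto (fun n => d (T^[n + 1] x) z) Filter.atTop (nhds 0) :=
      hz.comp (tendsto_add_atTop_nat 1)
    have hsum : Filter.Tendsto (fun n => d (T^[n + 1] x) z + d (T^[n] x) z)
        Filter.atTop (nhds 0) := by
      have := hz1.add hz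
      simpa using this
    have hbound : ∀ n : ℕ, d z (T z) ≤ d (T^[n + 1] x) z + d (T^[n] x) z := by
      intro n
      have h1 := htri z (T^[n + 1] x) (T z)
      have h2 : d (T^[n + 1] x) (T z) ≤ φ (d (T^[n] x) z) := by
        have : T^[n + 1] x = T (T^[n] x) := Function.iterate_succ_apply' T n x
        rw [this]
        exact hcontr _ _
      have h3 : φ (d (T^[n] x) z) ≤ d (T^[n] x) z := hφle _ (hnn _ _)
      have h4 : d z (T^[n + 1] x) = d (T^[n + 1] x) z := hsym _ _
      linarith
    have : d z (T z) ≤ 0 := ge_of_tendsto' hsum hbound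
    exact le_antisymm this (hnn _ _)
  · intro z₁ z₂ h₁ h₂
    by_contra h
    have hs : 0 < d z₁ z₂ := lt_of_le_of_ne (hnn _ _) (Ne.symm h)
    have h3 : d z₁ z₂ ≤ d z₁ (T z₁) + d (T z₁) (T z₂) + d (T z₂) z₂ := by
      have ha := htri z₁ (T z₁) z₂
      have hb := htri (T z₁) (T z₂) z₂
      linarith
    have h4 : d (T z₂) z₂ = 0 := by rw [hsym]; exact h₂
    have h5 : d (T z₁) (T z₂) ≤ φ (d z₁ z₂) := hcontr _ _
    have h6 : φ (d z₁ z₂) < d z₁ z₂ := hφlt _ hs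
    linarith
end

section
/- Let (X,d) be a symmetric space where d is triangular and (X,d) is 0-complete, and let T : X → X be d-asymptotic. Suppose T is (d,M2;φ)-contractive, i.e. d(Tx,Ty) ≤ φ(M2(x,y)) for all x,y ∈ X with M2(x,y) := max{d(x,y), d(x,Tx), d(y,Ty)}, for some nearly right admissible normal function φ : [0,∞) → [0,∞). Then T is a global Picard operator (modulo d): for every x ∈ X the sequence (T^n x) 0d-converges and each of its 0d-limits z satisfies d(z,Tz) = 0; moreover Fix(T;d) := {z ∈ X : d(z,Tz) = 0} is a d-singleton. -/
open Filter Set Topology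

theorem stmt_8 {X : Type*}
    (d : X → X → ℝ)
    (hnn : ∀ x y, 0 ≤ d x y)
    (hsym : ∀ x y, d x y = d y x)
    (htri : ∀ x y z, d x z ≤ d x y + d y z)
    (hcomp : ∀ x : ℕ → X,
      (∀ ε > 0, ∃ j : ℕ, ∀ m n : ℕ, j ≤ m → m < n → d (x m) (x n) < ε) →
      ∃ z : X, Filter.Tendsto (fun n => d (x n) z) Filter.atTop (nhds 0))
    (T : X → X)
    (hasym : ∀ x : X, Filter.Tendsto (fun n => d (T^[n] x) (T^[n + 1] x))
      Filter.atTop (nhds 0))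
    (φ : ℝ → ℝ)
    (hφnn : ∀ t : ℝ, 0 ≤ t → 0 ≤ φ t)
    (hφ0 : φ 0 = 0)
    (hφlt : ∀ t : ℝ, 0 < t → φ t < t)
    (hadm : ∃ Q : Set ℝ, Q.Countable ∧ ∀ s : ℝ, 0 < s → s ∉ Q →
      max (Filter.limsup φ (nhdsWithin s (Set.Ioi s))) (φ s) < s)
    (hcontr : ∀ x y, d (T x) (T y) ≤ φ (max (d x y) (max (d x (T x)) (d y (T y)))))
    :
    (∀ x : X, ∃ z : X, Filter.Tendsto (fun n => d (T^[n] x) z) Filter.atTop (nhds 0)) ∧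
    (∀ x z : X, Filter.Tendsto (fun n => d (T^[n] x) z) Filter.atTop (nhds 0) →
      d z (T z) = 0) ∧
    (∀ z₁ z₂ : X, d z₁ (T z₁) = 0 → d z₂ (T z₂) = 0 → d z₁ z₂ = 0) := by
  classical
  obtain ⟨Q, hQc, hQ⟩ := hadm
  -- Cauchy property of orbits
  have key : ∀ x : X, ∀ ε₀ : ℝ, 0 < ε₀ →
      ∃ j : ℕ, ∀ m n : ℕ, j ≤ m → m < n → d (T^[m] x) (T^[n] x) < ε₀ := by
    intro x ε₀ hε₀
    set f : ℕ → X := fun k => T^[k] x with hf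
    set ρ : ℕ → ℝ := fun k => d (f k) (f (k + 1)) with hρ
    have hρ0 : Tendsto ρ atTop (nhds 0) := hasym x
    -- pick ε in (0, ε₀) not in Q
    have hnotsub : ¬ (Set.Ioo (0:ℝ) ε₀ ⊆ Q) := by
      intro hsub
      have hc : (Set.Ioo (0:ℝ) ε₀).Countable := hQc.mono hsub
      have := hc.le_aleph0
      rw [Cardinal.mk_Ioo_real hε₀] at this
      exact absurd this (not_le.mpr Cardinal.aleph0_lt_continuum)
    obtain ⟨ε, hεI, hεQ⟩ := Set.not_subset.mp hnotsub
    obtain ⟨hεpos, hεlt⟩ := hεI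
    suffices h : ∃ j : ℕ, ∀ m n : ℕ, j ≤ m → m < n → d (f m) (f n) < ε by
      obtain ⟨j, hj⟩ := h
      exact ⟨j, fun m n hm hmn => lt_trans (hj m n hm hmn) hεlt⟩
    by_contra hC
    push_neg at hC
    -- admissibility at ε
    have hmax := hQ ε hεpos hεQ
    set b : ℝ := (max (Filter.limsup φ (nhdsWithin ε (Set.Ioi ε))) (φ ε) + ε) / 2 with hb
    have hmb : max (Filter.limsup φ (nhdsWithin ε (Set.Ioi ε))) (φ ε) < b := by
      rw [hb]; linarith
    have hbε : b < ε := by rw [hb]; linarith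
    have hbdd : Filter.IsBoundedUnder (· ≤ ·) (nhdsWithin ε (Set.Ioi ε)) φ := by
      refine ⟨ε + 1, Filter.eventually_map.mpr ?_⟩
      have h1 : Set.Ioo ε (ε + 1) ∈ nhdsWithin ε (Set.Ioi ε) := by
        exact Ioo_mem_nhdsGT_of_mem ⟨le_refl ε, by linarith⟩
      filter_upwards [h1] with t ht
      have : φ t < t := hφlt t (lt_trans hεpos ht.1)
      linarith [ht.2]
    have hev : ∀ᶠ t in nhdsWithin ε (Set.Ioi ε), φ t < b :=
      Filter.eventually_lt_of_limsup_lt (lt_of_le_of_lt (le_max_left _ _) hmb) hbdd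
    obtain ⟨u, hu, huball⟩ := mem_nhdsGT_iff_exists_Ioo_subset.mp hev
    have huε : ε < u := hu
    -- choose j₀ with ρ small beyond j₀
    have hδpos : 0 < min (u - ε) (min ε ((ε - b) / 2)) := by
      apply lt_min (by linarith) (lt_min hεpos (by linarith))
    have hevρ : ∀ᶠ k in atTop, ρ k < min (u - ε) (min ε ((ε - b) / 2)) :=
      hρ0.eventually_lt_const hδpos
    obtain ⟨j₀, hj₀⟩ := eventually_atTop.mp hevρ
    have hρsmall : ∀ k, j₀ ≤ k → ρ k < min (u - ε) (min ε ((ε - b) / 2)) := hj₀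
    obtain ⟨m, n, hjm, hmn, hεd⟩ := hC j₀
    -- minimal N > m with ε ≤ d(f m, f N)
    have hPne : ∃ N, m < N ∧ ε ≤ d (f m) (f N) := ⟨n, hmn, hεd⟩
    set N := Nat.find hPne with hN
    have hspec : m < N ∧ ε ≤ d (f m) (f N) := Nat.find_spec hPne
    obtain ⟨hmN, hεN⟩ := hspec
    have hρm := hρsmall m hjm
    have hρmε : ρ m < ε := lt_of_lt_of_le hρm (le_trans (min_le_right _ _) (min_le_left _ _))
    have hρN := hρsmall N (le_trans hjm (le_of_lt hmN))
    have hρNε : ρ N < ε := lt_of_lt_of_le hρN (le_trans (min_le_right _ _) (min_le_left _ _))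
    -- N > m + 1
    have hNm1 : m + 1 < N := by
      rcases lt_or_ge (m+1) N with h | h
      · exact h
      · have hNe : N = m + 1 := le_antisymm h hmN
        rw [hNe] at hεN
        exact absurd hεN (not_le.mpr hρmε)
    have hprev : d (f m) (f (N - 1)) < ε := by
      have h1 : m < N - 1 := by omega
      have h2 : N - 1 < N := by omega
      have := Nat.find_min hPne h2
      push_neg at this
      exact this h1
    have hρN1 := hρsmall (N - 1) (by omega)
    have hρN1u : ρ (N - 1) < u - ε :=
      lt_of_lt_of_le hρN1 (min_le_left _ _)
    set t : ℝ := d (f m) (f N) with ht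
    have hεt : ε ≤ t := hεN
    have hNe : N - 1 + 1 = N := by omega
    have h4 : ρ (N - 1) = d (f (N - 1)) (f N) := by
      show d (f (N - 1)) (f (N - 1 + 1)) = d (f (N - 1)) (f N)
      rw [hNe]
    have htu : t < u := by
      have h3 : t ≤ d (f m) (f (N - 1)) + ρ (N - 1) := by
        rw [h4]
        exact htri (f m) (f (N - 1)) (f N)
      linarith
    -- φ t ≤ b
    have hφt : φ t ≤ b := by
      rcases eq_or_lt_of_le hεt with h | h
      · rw [← h]; exact le_of_lt (lt_of_le_of_lt (le_max_right _ _) hmb)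
      · exact le_of_lt (huball ⟨h, htu⟩)
    -- contraction step
    have hTfm : T (f m) = f (m + 1) := (Function.iterate_succ_apply' T m x).symm
    have hTfN : T (f N) = f (N + 1) := (Function.iterate_succ_apply' T N x).symm
    have hcon := hcontr (f m) (f N)
    rw [hTfm, hTfN] at hcon
    have hmaxeq : max (d (f m) (f N)) (max (d (f m) (f (m+1))) (d (f N) (f (N+1)))) = t := by
      have h1 : d (f m) (f (m+1)) ≤ t := le_trans (le_of_lt hρmε) hεt
      have h2 : d (f N) (f (N+1)) ≤ t := le_trans (le_of_lt hρNε) hεt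
      rw [max_eq_left (max_le h1 h2)]
    rw [hmaxeq] at hcon
    have hstep : d (f (m+1)) (f (N+1)) ≤ b := le_trans hcon hφt
    -- final contradiction
    have htr : t ≤ ρ m + d (f (m+1)) (f (N+1)) + ρ N := by
      have h1 := htri (f m) (f (m+1)) (f N)
      have h2 := htri (f (m+1)) (f (N+1)) (f N)
      have h3 : d (f (N+1)) (f N) = ρ N := hsym _ _
      rw [h3] at h2
      linarith
    have hρm2 : ρ m < (ε - b) / 2 :=
      lt_of_lt_of_le hρm (le_trans (min_le_right _ _) (min_le_right _ _))
    have hρN2 : ρ N < (ε - b) / 2 :=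
      lt_of_lt_of_le hρN (le_trans (min_le_right _ _) (min_le_right _ _))
    linarith
  refine ⟨fun x => hcomp _ (fun ε hε => key x ε hε), ?_, ?_⟩
  · -- every 0d-limit of an orbit is a fixed point mod d
    intro x z hz
    by_contra hne
    have ha : 0 < d z (T z) := lt_of_le_of_ne (hnn z (T z)) (Ne.symm hne)
    set a : ℝ := d z (T z) with hadef
    have hev1 : ∀ᶠ n in atTop, d (T^[n] x) z < a := hz.eventually_lt_const ha
    have hev2 : ∀ᶠ n in atTop, d (T^[n] x) (T^[n+1] x) < a := (hasym x).eventually_lt_const ha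
    have hkey : ∀ᶠ n in atTop, a ≤ d z (T^[n+1] x) + φ a := by
      filter_upwards [hev1, hev2] with n h1 h2
      have hcon := hcontr (T^[n] x) z
      have hTn : T (T^[n] x) = T^[n+1] x := (Function.iterate_succ_apply' T n x).symm
      rw [hTn] at hcon
      have hmaxeq : max (d (T^[n] x) z) (max (d (T^[n] x) (T^[n+1] x)) (d z (T z))) = a := by
        rw [max_eq_right (le_of_lt h2), max_eq_right (le_of_lt h1)]
      rw [hmaxeq] at hcon
      have htr := htri z (T^[n+1] x) (T z)
      have hs : d z (T^[n+1] x) = d (T^[n+1] x) z := hsym _ _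
      rw [hs] at htr
      linarith
    have hz1 : Tendsto (fun n => d (T^[n+1] x) z) atTop (nhds 0) :=
      hz.comp (tendsto_add_atTop_nat 1)
    have hle : a - φ a ≤ 0 := by
      have hev : ∀ᶠ n in atTop, a - φ a ≤ d (T^[n+1] x) z := hkey.mono fun n hn => by
        have := hsym z (T^[n+1] x); linarith
      exact ge_of_tendsto hz1 hev
    have := hφlt a ha
    linarith
  · intro z₁ z₂ h1 h2
    by_contra hne
    have hd : 0 < d z₁ z₂ := lt_of_le_of_ne (hnn z₁ z₂) (Ne.symm hne)
    have hcon := hcontr z₁ z₂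
    rw [h1, h2] at hcon
    have hmaxeq : max (d z₁ z₂) (max (0:ℝ) 0) = d z₁ z₂ := by
      rw [max_self, max_eq_left (le_of_lt hd)]
    rw [hmaxeq] at hcon
    have htr : d z₁ z₂ ≤ d z₁ (T z₁) + d (T z₁) (T z₂) + d (T z₂) z₂ := by
      have ha := htri z₁ (T z₁) z₂
      have hb := htri (T z₁) (T z₂) z₂
      linarith
    rw [h1, hsym (T z₂) z₂, h2] at htr
    have := hφlt (d z₁ z₂) hd
    linarith
end

section
/- Let (X,d) be a symmetric space where d is triangular and (X,d) is 0-complete, and let T : X → X be d-asymptotic. Suppose T is (d,M3;φ)-contractive, i.e. d(Tx,Ty) ≤ φ(M3(x,y)) for all x,y ∈ X with M3(x,y) := max{d(x,y), d(x,Tx), d(y,Ty), (d(x,Ty)+d(Tx,y))/2}, for some nearly right admissible normal function φ : [0,∞) → [0,∞). Then T is a global Picard operator (modulo d): for every x ∈ X the sequence (T^n x) 0d-converges and each of its 0d-limits z satisfies d(z,Tz) = 0; moreover Fix(T;d) := {z ∈ X : d(z,Tz) = 0} is a d-singleton. -/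
open Filter Set Topology

theorem stmt_9 {X : Type*}
    (d : X → X → ℝ)
    (hnn : ∀ x y, 0 ≤ d x y)
    (hsym : ∀ x y, d x y = d y x)
    (htri : ∀ x y z, d x z ≤ d x y + d y z)
    (hcomp : ∀ x : ℕ → X,
      (∀ ε > 0, ∃ j : ℕ, ∀ m n : ℕ, j ≤ m → m < n → d (x m) (x n) < ε) →
      ∃ z : X, Filter.Tendsto (fun n => d (x n) z) Filter.atTop (nhds 0))
    (T : X → X)
    (hasym : ∀ x : X, Filter.Tendsto (fun n => d (T^[n] x) (T^[n + 1] x))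
      Filter.atTop (nhds 0))
    (φ : ℝ → ℝ)
    (hφnn : ∀ t : ℝ, 0 ≤ t → 0 ≤ φ t)
    (hφ0 : φ 0 = 0)
    (hφlt : ∀ t : ℝ, 0 < t → φ t < t)
    (hadm : ∃ Q : Set ℝ, Q.Countable ∧ ∀ s : ℝ, 0 < s → s ∉ Q →
      max (Filter.limsup φ (nhdsWithin s (Set.Ioi s))) (φ s) < s)
    (hcontr : ∀ x y, d (T x) (T y) ≤
      φ (max (max (d x y) (max (d x (T x)) (d y (T y))))
          ((d x (T y) + d (T x) y) / 2)))
    :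
    (∀ x : X, ∃ z : X, Filter.Tendsto (fun n => d (T^[n] x) z) Filter.atTop (nhds 0)) ∧
    (∀ x z : X, Filter.Tendsto (fun n => d (T^[n] x) z) Filter.atTop (nhds 0) →
      d z (T z) = 0) ∧
    (∀ z₁ z₂ : X, d z₁ (T z₁) = 0 → d z₂ (T z₂) = 0 → d z₁ z₂ = 0) := by
  classical
  obtain ⟨Q, hQc, hQ⟩ := hadm
  -- Key: each orbit is 0d-Cauchy
  have key : ∀ x : X, ∀ ε₀ : ℝ, 0 < ε₀ → ∃ j : ℕ, ∀ m n : ℕ, j ≤ m → m < n →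
      d (T^[m] x) (T^[n] x) < ε₀ := by
    intro x ε₀ hε₀
    by_contra hbad
    push_neg at hbad
    -- choose ε ∈ (0, ε₀] outside Q
    have hnsub : ¬ (Ioc (0:ℝ) ε₀ ⊆ Q) := by
      intro hsub
      have hc : (Ioc (0:ℝ) ε₀).Countable := hQc.mono hsub
      have h1 : Cardinal.mk (Ioc (0:ℝ) ε₀) ≤ Cardinal.aleph0 :=
        Cardinal.mk_le_aleph0_iff.mpr (Set.countable_coe_iff.mpr hc)
      rw [Cardinal.mk_Ioc_real hε₀] at h1
      exact absurd h1 Cardinal.aleph0_lt_continuum.not_ge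
    obtain ⟨ε, hεI, hεQ⟩ := not_subset.mp hnsub
    have hε : 0 < ε := hεI.1
    have hεle : ε ≤ ε₀ := hεI.2
    have hbad' : ∀ j : ℕ, ∃ m n : ℕ, j ≤ m ∧ m < n ∧ ε ≤ d (T^[m] x) (T^[n] x) := by
      intro j
      obtain ⟨m, n, h1, h2, h3⟩ := hbad j
      exact ⟨m, n, h1, h2, le_trans hεle h3⟩
    have hmax := hQ ε hε hεQ
    set b := max (limsup φ (𝓝[>] ε)) (φ ε) with hb
    set c := (b + ε) / 2 with hc
    have hbc : b < c := by simp only [hc]; linarith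
    have hcε : c < ε := by simp only [hc]; linarith
    have hbdd : IsBoundedUnder (· ≤ ·) (𝓝[>] ε) φ := by
      refine ⟨ε + 1, eventually_map.mpr ?_⟩
      filter_upwards [Ioo_mem_nhdsGT_of_mem (⟨le_refl ε, by linarith⟩ : ε ∈ Ico ε (ε + 1))]
        with t ht
      exact le_of_lt (lt_trans (hφlt t (lt_trans hε ht.1)) ht.2)
    have hev : ∀ᶠ t in 𝓝[>] ε, φ t < c :=
      eventually_lt_of_limsup_lt (lt_of_le_of_lt (le_max_left _ _) hbc) hbdd
    obtain ⟨u, hu, hsubu⟩ := mem_nhdsGT_iff_exists_Ioo_subset.mp hev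
    have huε : ε < u := hu
    have hφsmall : ∀ t : ℝ, ε ≤ t → t < u → φ t < c := by
      intro t h1 h2
      rcases eq_or_lt_of_le h1 with h | h
      · rw [← h]; exact lt_of_le_of_lt (le_max_right _ _) hbc
      · exact hsubu ⟨h, h2⟩
    -- thresholds
    set τ := min ((u - ε) / 2) (min ((ε - c) / 2) ε) with hτ
    have hτpos : 0 < τ := lt_min (by linarith) (lt_min (by linarith) hε)
    have hτ1 : 2 * τ ≤ u - ε := by
      have h1 := min_le_left ((u - ε) / 2) (min ((ε - c) / 2) ε)
      rw [← hτ] at h1; linarith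
    have hτ2 : 2 * τ ≤ ε - c := by
      have h1 := min_le_right ((u - ε) / 2) (min ((ε - c) / 2) ε)
      have h2 := min_le_left ((ε - c) / 2) ε
      rw [← hτ] at h1; linarith
    have hτ3 : τ ≤ ε := by
      have h1 := min_le_right ((u - ε) / 2) (min ((ε - c) / 2) ε)
      have h2 := min_le_right ((ε - c) / 2) ε
      rw [← hτ] at h1; linarith
    obtain ⟨j, hj⟩ := eventually_atTop.mp ((hasym x).eventually_lt_const hτpos)
    obtain ⟨m, n₀, hjm, hmn₀, hd₀⟩ := hbad' j
    have hPex : ∃ n : ℕ, m < n ∧ ε ≤ d (T^[m] x) (T^[n] x) := ⟨n₀, hmn₀, hd₀⟩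
    obtain ⟨hmn, hdn⟩ := Nat.find_spec hPex
    have hNpos : 0 < Nat.find hPex := lt_of_le_of_lt (Nat.zero_le m) hmn
    obtain ⟨k, hk⟩ := Nat.exists_eq_succ_of_ne_zero hNpos.ne'
    rw [hk] at hmn hdn
    have hmk : m ≤ k := Nat.lt_succ_iff.mp hmn
    have hmk' : m < k := by
      rcases lt_or_eq_of_le hmk with h | h
      · exact h
      · exfalso
        subst h
        have h2 := hj m hjm
        linarith
    have hdk : d (T^[m] x) (T^[k] x) < ε := by
      by_contra h
      push_neg at h
      exact Nat.find_min hPex (by omega) ⟨hmk', h⟩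
    have hDm : d (T^[m] x) (T^[m + 1] x) < τ := hj m hjm
    have hDk : d (T^[k] x) (T^[k + 1] x) < τ := hj k (le_trans hjm hmk'.le)
    have hDk1 : d (T^[k + 1] x) (T^[k + 1 + 1] x) < τ := hj (k + 1) (by omega)
    have ha2 : d (T^[m] x) (T^[k + 1] x) < ε + τ := by
      have := htri (T^[m] x) (T^[k] x) (T^[k + 1] x)
      linarith
    have hC := hcontr (T^[m] x) (T^[k + 1] x)
    simp only [← Function.iterate_succ_apply' T] at hC
    set s := max (max (d (T^[m] x) (T^[k + 1] x))
        (max (d (T^[m] x) (T^[m + 1] x)) (d (T^[k + 1] x) (T^[k + 1 + 1] x))))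
        ((d (T^[m] x) (T^[k + 1 + 1] x) + d (T^[m + 1] x) (T^[k + 1] x)) / 2) with hs
    have hεs : ε ≤ s := le_trans hdn (le_trans (le_max_left _ _) (le_max_left _ _))
    have hmix1 : d (T^[m] x) (T^[k + 1 + 1] x) ≤
        d (T^[m] x) (T^[k + 1] x) + d (T^[k + 1] x) (T^[k + 1 + 1] x) :=
      htri _ _ _
    have hmix2 : d (T^[m + 1] x) (T^[k + 1] x) ≤
        d (T^[m + 1] x) (T^[m] x) + d (T^[m] x) (T^[k + 1] x) :=
      htri _ _ _
    have hsymm : d (T^[m + 1] x) (T^[m] x) = d (T^[m] x) (T^[m + 1] x) := hsym _ _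
    have hsu : s < u := by
      have h1 : s ≤ d (T^[m] x) (T^[k + 1] x) + τ := by
        apply max_le
        · apply max_le (by linarith)
          apply max_le (by linarith) (by linarith)
        · linarith
      linarith
    have hφs : φ s < c := hφsmall s hεs hsu
    -- final contradiction
    have t1 : d (T^[m] x) (T^[k + 1] x) ≤
        d (T^[m] x) (T^[m + 1] x) + d (T^[m + 1] x) (T^[k + 1] x) := htri _ _ _
    have t2 : d (T^[m + 1] x) (T^[k + 1] x) ≤
        d (T^[m + 1] x) (T^[k + 1 + 1] x) + d (T^[k + 1 + 1] x) (T^[k + 1] x) := htri _ _ _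
    have t3 : d (T^[k + 1 + 1] x) (T^[k + 1] x) = d (T^[k + 1] x) (T^[k + 1 + 1] x) :=
      hsym _ _
    linarith
  refine ⟨?_, ?_, ?_⟩
  · -- existence of limits
    intro x
    exact hcomp (fun n => T^[n] x) (fun ε hε => key x ε hε)
  · -- every limit of an orbit is a fixed point mod d
    intro x z hz
    by_contra hne
    have hr : 0 < d z (T z) := lt_of_le_of_ne (hnn _ _) (Ne.symm hne)
    set r := d z (T z) with hrdef
    have hp : φ r < r := hφlt r hr
    set η := min (r / 2) (r - φ r) with hη
    have hηpos : 0 < η := lt_min (by linarith) (by linarith)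
    have hη1 : η ≤ r / 2 := min_le_left _ _
    have hη2 : η ≤ r - φ r := min_le_right _ _
    have h1 : ∀ᶠ n : ℕ in atTop, d (T^[n] x) z < η := hz.eventually_lt_const hηpos
    have h2 : ∀ᶠ n : ℕ in atTop, d (T^[n + 1] x) z < η :=
      (hz.comp (tendsto_add_atTop_nat 1)).eventually_lt_const hηpos
    obtain ⟨n, hn1, hn2⟩ := (h1.and h2).exists
    have hC := hcontr (T^[n] x) z
    simp only [← Function.iterate_succ_apply' T] at hC
    -- the max equals r
    have hDn : d (T^[n] x) (T^[n + 1] x) ≤ d (T^[n] x) z + d z (T^[n + 1] x) := htri _ _ _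
    have hs1 : d z (T^[n + 1] x) = d (T^[n + 1] x) z := hsym _ _
    have hmix : d (T^[n] x) (T z) ≤ d (T^[n] x) z + r := by
      have := htri (T^[n] x) z (T z); linarith
    have hM : max (max (d (T^[n] x) z) (max (d (T^[n] x) (T^[n + 1] x)) (d z (T z))))
        ((d (T^[n] x) (T z) + d (T^[n + 1] x) z) / 2) = r := by
      apply le_antisymm
      · apply max_le
        · apply max_le (by linarith)
          apply max_le (by linarith) (le_refl r)
        · linarith
      · exact le_trans (le_trans (le_max_right _ _) (le_max_right _ _)) (le_max_left _ _)
    rw [hM] at hC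
    have hfin : r ≤ d z (T^[n + 1] x) + d (T^[n + 1] x) (T z) := htri _ _ _
    linarith
  · -- the fixed point set is a d-singleton
    intro z₁ z₂ h1 h2
    by_contra hne
    have hs : 0 < d z₁ z₂ := lt_of_le_of_ne (hnn _ _) (Ne.symm hne)
    have hC := hcontr z₁ z₂
    have hmix1 : d z₁ (T z₂) ≤ d z₁ z₂ + d z₂ (T z₂) := htri _ _ _
    have hmix2 : d (T z₁) z₂ ≤ d (T z₁) z₁ + d z₁ z₂ := htri _ _ _
    have hsy : d (T z₁) z₁ = d z₁ (T z₁) := hsym _ _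
    have hM : max (max (d z₁ z₂) (max (d z₁ (T z₁)) (d z₂ (T z₂))))
        ((d z₁ (T z₂) + d (T z₁) z₂) / 2) = d z₁ z₂ := by
      apply le_antisymm
      · apply max_le
        · apply max_le (le_refl _)
          apply max_le (by linarith) (by linarith)
        · linarith
      · exact le_trans (le_max_left _ _) (le_max_left _ _)
    rw [hM] at hC
    have hφs : φ (d z₁ z₂) < d z₁ z₂ := hφlt _ hs
    have t1 : d z₁ z₂ ≤ d z₁ (T z₁) + d (T z₁) z₂ := htri _ _ _
    have t2 : d (T z₁) z₂ ≤ d (T z₁) (T z₂) + d (T z₂) z₂ := htri _ _ _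
    have t3 : d (T z₂) z₂ = d z₂ (T z₂) := hsym _ _
    linarith
end

section
/- Let (X,d) be a symmetric space where d is reflexive triangular, and let T : X → X satisfy d(Tx,Ty) ≤ φ(M3(x,y)) for all x,y ∈ X, where M3(x,y) := max{d(x,y), d(x,Tx), d(y,Ty), (d(x,Ty)+d(Tx,y))/2} and φ : [0,∞) → [0,∞) is an asymptotic normal function. Then T is d-asymptotic, i.e., d(T^n x, T^{n+1} x) → 0 as n → ∞, for every x ∈ X. -/
open Filter Set Topology

theorem stmt_10 {X : Type*}
    (d : X → X → ℝ)
    (hnn : ∀ x y, 0 ≤ d x y)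
    (hsym : ∀ x y, d x y = d y x)
    (hrtri : ∀ x y z, d x z + d y y ≤ d x y + d y z)
    (T : X → X)
    (φ : ℝ → ℝ)
    (hφnn : ∀ t : ℝ, 0 ≤ t → 0 ≤ φ t)
    (hφ0 : φ 0 = 0)
    (hφlt : ∀ t : ℝ, 0 < t → φ t < t)
    (hφasym : ∀ r : ℕ → ℝ, (∀ n, 0 ≤ r n) → (∀ n, r (n + 1) ≤ φ (r n)) →
      Filter.Tendsto r Filter.atTop (nhds 0))
    (hcontr : ∀ x y, d (T x) (T y) ≤
      φ (max (max (d x y) (max (d x (T x)) (d y (T y))))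
          ((d x (T y) + d (T x) y) / 2)))
    :
    ∀ x : X, Filter.Tendsto (fun n => d (T^[n] x) (T^[n + 1] x))
      Filter.atTop (nhds 0) := by
  have key : ∀ u : X, d (T u) (T (T u)) ≤ φ (d u (T u)) := by
    intro u
    obtain ⟨a, ha⟩ : ∃ a, d u (T u) = a := ⟨_, rfl⟩
    obtain ⟨b, hb⟩ : ∃ b, d (T u) (T (T u)) = b := ⟨_, rfl⟩
    have hM : max (max (d u (T u)) (max (d u (T u)) (d (T u) (T (T u)))))
        ((d u (T (T u)) + d (T u) (T u)) / 2) = max a b := by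
      have h1 : d u (T (T u)) + d (T u) (T u) ≤ a + b := by
        rw [← ha, ← hb]; exact hrtri u (T u) (T (T u))
      have h2 : (d u (T (T u)) + d (T u) (T u)) / 2 ≤ max a b := by
        have : a + b ≤ max a b + max a b := add_le_add (le_max_left a b) (le_max_right a b)
        linarith
      rw [ha, hb, ← max_assoc, max_self, max_eq_left h2]
    have hc := hcontr u (T u)
    rw [hM, hb] at hc
    rw [ha, hb]
    by_cases hab : b ≤ a
    · rwa [max_eq_left hab] at hc
    · push_neg at hab
      have hb0 : 0 < b := lt_of_le_of_lt (ha ▸ hnn u (T u)) hab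
      rw [max_eq_right hab.le] at hc
      exact absurd (lt_of_le_of_lt hc (hφlt b hb0)) (lt_irrefl b)
  intro x
  apply hφasym
  · intro n; exact hnn _ _
  · intro n
    have e1 : T^[n + 1] x = T (T^[n] x) := Function.iterate_succ_apply' T n x
    have e2 : T^[n + 2] x = T (T (T^[n] x)) := by
      rw [Function.iterate_succ_apply' T (n+1) x, e1]
    simp only [e1, e2]
    exact key (T^[n] x)
end

section
/- Let (X,d) be a symmetric space where d is triangular, and let T : X → X satisfy d(Tx,Ty) ≤ φ(M2(x,y)) for all x,y ∈ X, where M2(x,y) := max{d(x,y), d(x,Tx), d(y,Ty)} and φ : [0,∞) → [0,∞) is an asymptotic normal function. Then T is d-asymptotic, i.e., d(T^n x, T^{n+1} x) → 0 as n → ∞, for every x ∈ X. -/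
open Filter Set Topology

theorem stmt_12 {X : Type*}
    (d : X → X → ℝ)
    (hnn : ∀ x y, 0 ≤ d x y)
    (hsym : ∀ x y, d x y = d y x)
    (htri : ∀ x y z, d x z ≤ d x y + d y z)
    (T : X → X)
    (φ : ℝ → ℝ)
    (hφnn : ∀ t : ℝ, 0 ≤ t → 0 ≤ φ t)
    (hφ0 : φ 0 = 0)
    (hφlt : ∀ t : ℝ, 0 < t → φ t < t)
    (hφasym : ∀ r : ℕ → ℝ, (∀ n, 0 ≤ r n) → (∀ n, r (n + 1) ≤ φ (r n)) →
      Filter.Tendsto r Filter.atTop (nhds 0))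
    (hcontr : ∀ x y, d (T x) (T y) ≤ φ (max (d x y) (max (d x (T x)) (d y (T y)))))
    :
    ∀ x : X, Filter.Tendsto (fun n => d (T^[n] x) (T^[n + 1] x))
      Filter.atTop (nhds 0) := by
  intro x
  set r : ℕ → ℝ := fun n => d (T^[n] x) (T^[n + 1] x) with hr
  have hrnn : ∀ n, 0 ≤ r n := fun n => hnn _ _
  apply hφasym r hrnn
  intro n
  have key := hcontr (T^[n] x) (T^[n + 1] x)
  have e1 : T (T^[n] x) = T^[n + 1] x := by
    rw [Function.iterate_succ_apply']
  have e2 : T (T^[n + 1] x) = T^[n + 2] x := by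
    simp [Function.iterate_succ_apply']
  rw [e1, e2] at key
  -- key : r (n+1) ≤ φ (max (r n) (max (r n) (r (n+1))))
  have key' : r (n + 1) ≤ φ (max (r n) (r (n + 1))) := by
    have h : max (r n) (max (r n) (r (n+1))) = max (r n) (r (n+1)) := by
      rw [← max_assoc, max_self]
    calc r (n + 1) ≤ φ (max (r n) (max (r n) (r (n+1)))) := key
      _ = _ := by rw [h]
  rcases le_total (r (n + 1)) (r n) with h | h
  · rwa [max_eq_left h] at key'
  · rw [max_eq_right h] at key'
    rcases eq_or_lt_of_le (hrnn (n + 1)) with h0 | h0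
    · rw [← h0]; exact hφnn _ (hrnn n)
    · exact absurd (lt_of_le_of_lt key' (hφlt _ h0)) (lt_irrefl _)
end

section
/- Let (X,d) be a symmetric space where d is reflexive triangular and (X,d) is 0-complete. Suppose T : X → X satisfies d(Tx,Ty) ≤ φ(M3(x,y)) for all x,y ∈ X, where M3(x,y) := max{d(x,y), d(x,Tx), d(y,Ty), (d(x,Ty)+d(Tx,y))/2} and φ : [0,∞) → [0,∞) is a nearly right admissible asymptotic normal function. Then T is a global Picard operator (modulo d): for every x ∈ X the sequence (T^n x) 0d-converges and each of its 0d-limits z satisfies d(z,Tz) = 0; moreover Fix(T;d) := {z ∈ X : d(z,Tz) = 0} is a d-singleton. -/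
open Filter Set Topology

lemma stmt_13_aux_not_countable_Ioc {a b : ℝ} (h : a < b) :
    ¬ (Set.Ioc a b).Countable := by
  intro hc
  have h1 : Cardinal.mk (Set.Ioc a b) ≤ Cardinal.aleph0 := hc.le_aleph0
  rw [Cardinal.mk_Ioc_real h] at h1
  exact absurd h1 (not_le.2 Cardinal.aleph0_lt_continuum)

theorem stmt_13 {X : Type*}
    (d : X → X → ℝ)
    (hnn : ∀ x y, 0 ≤ d x y)
    (hsym : ∀ x y, d x y = d y x)
    (hrtri : ∀ x y z, d x z + d y y ≤ d x y + d y z)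
    (hcomp : ∀ x : ℕ → X,
      (∀ ε > 0, ∃ j : ℕ, ∀ m n : ℕ, j ≤ m → m < n → d (x m) (x n) < ε) →
      ∃ z : X, Filter.Tendsto (fun n => d (x n) z) Filter.atTop (nhds 0))
    (T : X → X)
    (φ : ℝ → ℝ)
    (hφnn : ∀ t : ℝ, 0 ≤ t → 0 ≤ φ t)
    (hφ0 : φ 0 = 0)
    (hφlt : ∀ t : ℝ, 0 < t → φ t < t)
    (hφasym : ∀ r : ℕ → ℝ, (∀ n, 0 ≤ r n) → (∀ n, r (n + 1) ≤ φ (r n)) →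
      Filter.Tendsto r Filter.atTop (nhds 0))
    (hadm : ∃ Q : Set ℝ, Q.Countable ∧ ∀ s : ℝ, 0 < s → s ∉ Q →
      max (Filter.limsup φ (nhdsWithin s (Set.Ioi s))) (φ s) < s)
    (hcontr : ∀ x y, d (T x) (T y) ≤
      φ (max (max (d x y) (max (d x (T x)) (d y (T y))))
          ((d x (T y) + d (T x) y) / 2)))
    :
    (∀ x : X, ∃ z : X, Filter.Tendsto (fun n => d (T^[n] x) z) Filter.atTop (nhds 0)) ∧
    (∀ x z : X, Filter.Tendsto (fun n => d (T^[n] x) z) Filter.atTop (nhds 0) →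
      d z (T z) = 0) ∧
    (∀ z₁ z₂ : X, d z₁ (T z₁) = 0 → d z₂ (T z₂) = 0 → d z₁ z₂ = 0) := by
  -- genuine triangle inequality
  have tri : ∀ a b c : X, d a c ≤ d a b + d b c := by
    intro a b c
    have h1 := hrtri a b c
    have h2 := hnn b b
    linarith
  -- step inequality along orbits
  have step : ∀ x₀ : X, ∀ n : ℕ,
      d (T^[n+1] x₀) (T^[n+1+1] x₀) ≤ φ (d (T^[n] x₀) (T^[n+1] x₀)) := by
    intro x₀ n
    have e1 : T (T^[n] x₀) = T^[n+1] x₀ := (Function.iterate_succ_apply' T n x₀).symm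
    have e2 : T (T^[n+1] x₀) = T^[n+1+1] x₀ := (Function.iterate_succ_apply' T (n+1) x₀).symm
    have hcon := hcontr (T^[n] x₀) (T^[n+1] x₀)
    rw [e1, e2] at hcon
    set a := d (T^[n] x₀) (T^[n+1] x₀) with ha
    set b := d (T^[n+1] x₀) (T^[n+1+1] x₀) with hb
    have ha0 : 0 ≤ a := hnn _ _
    have hb0 : 0 ≤ b := hnn _ _
    have havg : (d (T^[n] x₀) (T^[n+1+1] x₀) + d (T^[n+1] x₀) (T^[n+1] x₀)) / 2 ≤ max a b := by
      have h1 := hrtri (T^[n] x₀) (T^[n+1] x₀) (T^[n+1+1] x₀)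
      have h2 : a ≤ max a b := le_max_left _ _
      have h3 : b ≤ max a b := le_max_right _ _
      linarith
    rcases le_or_gt b a with h | h
    · have hMa : max (max a (max a b))
          ((d (T^[n] x₀) (T^[n+1+1] x₀) + d (T^[n+1] x₀) (T^[n+1] x₀)) / 2) = a := by
        apply le_antisymm
        · apply max_le
          · exact max_le le_rfl (max_le le_rfl h)
          · exact havg.trans (by rw [max_eq_left h])
        · exact le_trans (le_max_left _ _) (le_max_left _ _)
      rw [hMa] at hcon
      exact hcon
    · exfalso
      have hMb : max (max a (max a b))
          ((d (T^[n] x₀) (T^[n+1+1] x₀) + d (T^[n+1] x₀) (T^[n+1] x₀)) / 2) = b := by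
        apply le_antisymm
        · apply max_le
          · exact max_le h.le (max_le h.le le_rfl)
          · exact havg.trans (by rw [max_eq_right h.le])
        · exact le_trans ((le_max_right a b).trans (le_max_right a _)) (le_max_left _ _)
      rw [hMb] at hcon
      have hbpos : 0 < b := lt_of_le_of_lt ha0 h
      have := hφlt b hbpos
      linarith
  -- the successive distances tend to 0
  have hc0 : ∀ x₀ : X, Filter.Tendsto (fun n => d (T^[n] x₀) (T^[n+1] x₀))
      Filter.atTop (nhds 0) := by
    intro x₀
    exact hφasym _ (fun n => hnn _ _) (fun n => step x₀ n)
  -- Cauchy property of orbits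
  have cauchy : ∀ x₀ : X, ∀ ε : ℝ, 0 < ε →
      ∃ j : ℕ, ∀ m n : ℕ, j ≤ m → m < n → d (T^[m] x₀) (T^[n] x₀) < ε := by
    intro x₀ ε hε
    obtain ⟨Q, hQc, hQ⟩ := hadm
    have hnotsub : ¬ (Set.Ioc 0 ε ⊆ Q) := by
      intro hsub
      exact stmt_13_aux_not_countable_Ioc hε (hQc.mono hsub)
    obtain ⟨ε1, hε1mem, hε1Q⟩ := Set.not_subset.1 hnotsub
    obtain ⟨hε1pos, hε1le⟩ := hε1mem
    suffices h : ∃ j : ℕ, ∀ m n : ℕ, j ≤ m → m < n → d (T^[m] x₀) (T^[n] x₀) < ε1 by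
      obtain ⟨j, hj⟩ := h
      exact ⟨j, fun m n hm hmn => lt_of_lt_of_le (hj m n hm hmn) hε1le⟩
    by_contra hnc
    push_neg at hnc
    have hL := hQ ε1 hε1pos hε1Q
    set L := max (Filter.limsup φ (nhdsWithin ε1 (Set.Ioi ε1))) (φ ε1) with hLdef
    set ε' := (L + ε1) / 2 with hε'def
    have hLlimsup : Filter.limsup φ (nhdsWithin ε1 (Set.Ioi ε1)) ≤ L := le_max_left _ _
    have hLφ : φ ε1 ≤ L := le_max_right _ _
    have hε'lt : ε' < ε1 := by rw [hε'def]; linarith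
    have hLε' : L < ε' := by rw [hε'def]; linarith
    have hbdd : Filter.IsBoundedUnder (· ≤ ·) (nhdsWithin ε1 (Set.Ioi ε1)) φ := by
      refine ⟨ε1 + 1, Filter.eventually_map.2 ?_⟩
      filter_upwards [Ioo_mem_nhdsGT_of_mem
        (show ε1 ∈ Set.Ico ε1 (ε1 + 1) from ⟨le_rfl, by linarith⟩)] with t ht
      exact ((hφlt t (hε1pos.trans ht.1)).le.trans ht.2.le)
    have hev : ∀ᶠ t in nhdsWithin ε1 (Set.Ioi ε1), φ t < ε' :=
      Filter.eventually_lt_of_limsup_lt (lt_of_le_of_lt hLlimsup hLε') hbdd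
    obtain ⟨u, hu, hsub2⟩ := mem_nhdsGT_iff_exists_Ioo_subset.1 hev
    rw [Set.mem_Ioi] at hu
    set δ := min (min ((ε1 - ε') / 3) ((u - ε1) / 3)) ε1 with hδdef
    have hδpos : 0 < δ := by
      apply lt_min (lt_min _ _) hε1pos <;> linarith
    have hδ1 : δ ≤ (ε1 - ε') / 3 := le_trans (min_le_left _ _) (min_le_left _ _)
    have hδ2 : δ ≤ (u - ε1) / 3 := le_trans (min_le_left _ _) (min_le_right _ _)
    have hδ3 : δ ≤ ε1 := min_le_right _ _
    obtain ⟨j, hj⟩ := Filter.eventually_atTop.1 ((hc0 x₀).eventually (eventually_lt_nhds hδpos))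
    obtain ⟨m, n0, hjm, hmn0, hd0⟩ := hnc j
    have hP : ∃ k : ℕ, m < k ∧ ε1 ≤ d (T^[m] x₀) (T^[k] x₀) := ⟨n0, hmn0, hd0⟩
    set n := Nat.find hP with hndef
    obtain ⟨hmn, hdn⟩ := Nat.find_spec hP
    rw [← hndef] at hmn hdn
    have hcm : d (T^[m] x₀) (T^[m+1] x₀) < δ := hj m hjm
    have hne2 : n ≠ m + 1 := by
      intro h
      rw [h] at hdn
      linarith
    have hn2 : m + 2 ≤ n := by omega
    obtain ⟨k, hk, hmk⟩ : ∃ k, n = k + 1 ∧ m < k := ⟨n - 1, by omega, by omega⟩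
    have hnotP := Nat.find_min hP (show k < n by omega)
    have hdk : d (T^[m] x₀) (T^[k] x₀) < ε1 :=
      lt_of_not_ge (fun hge => hnotP ⟨hmk, hge⟩)
    have hck : d (T^[k] x₀) (T^[k+1] x₀) < δ := hj k (by omega)
    have hcn : d (T^[n] x₀) (T^[n+1] x₀) < δ := hj n (by omega)
    set t := d (T^[m] x₀) (T^[n] x₀) with htdef
    have ht1 : ε1 ≤ t := hdn
    have ht2 : t < ε1 + δ := by
      have := tri (T^[m] x₀) (T^[k] x₀) (T^[n] x₀)
      have hkn : d (T^[k] x₀) (T^[n] x₀) < δ := by rw [hk]; exact hck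
      linarith
    -- contraction between x_m and x_n
    have e1 : T (T^[m] x₀) = T^[m+1] x₀ := (Function.iterate_succ_apply' T m x₀).symm
    have e2 : T (T^[n] x₀) = T^[n+1] x₀ := (Function.iterate_succ_apply' T n x₀).symm
    have hcon := hcontr (T^[m] x₀) (T^[n] x₀)
    rw [e1, e2] at hcon
    set M := max (max t (max (d (T^[m] x₀) (T^[m+1] x₀)) (d (T^[n] x₀) (T^[n+1] x₀))))
      ((d (T^[m] x₀) (T^[n+1] x₀) + d (T^[m+1] x₀) (T^[n] x₀)) / 2) with hMdef
    have hb1 : d (T^[m] x₀) (T^[n+1] x₀) < t + δ := by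
      have := tri (T^[m] x₀) (T^[n] x₀) (T^[n+1] x₀)
      linarith
    have hb2 : d (T^[m+1] x₀) (T^[n] x₀) < δ + t := by
      have h1 := tri (T^[m+1] x₀) (T^[m] x₀) (T^[n] x₀)
      have h2 : d (T^[m+1] x₀) (T^[m] x₀) = d (T^[m] x₀) (T^[m+1] x₀) := hsym _ _
      linarith
    have hMle : M ≤ t + δ := by
      apply max_le
      · apply max_le (by linarith)
        apply max_le <;> linarith
      · linarith
    have hMge : t ≤ M := le_trans (le_max_left _ _) (le_max_left _ _)
    have hMu : M < u := by linarith
    have hφM : φ M < ε' := by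
      rcases eq_or_lt_of_le (ht1.trans hMge) with h | h
      · rw [← h]; linarith
      · exact hsub2 ⟨h, hMu⟩
    have hlow : t - 2 * δ < d (T^[m+1] x₀) (T^[n+1] x₀) := by
      have h1 := tri (T^[m] x₀) (T^[m+1] x₀) (T^[n] x₀)
      have h2 := tri (T^[m+1] x₀) (T^[n+1] x₀) (T^[n] x₀)
      have h3 : d (T^[n+1] x₀) (T^[n] x₀) = d (T^[n] x₀) (T^[n+1] x₀) := hsym _ _
      have h4 : d (T^[m+1] x₀) (T^[n] x₀) ≤ d (T^[m+1] x₀) (T^[n+1] x₀) +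
          d (T^[n+1] x₀) (T^[n] x₀) := tri _ _ _
      linarith
    linarith
  refine ⟨fun x => hcomp _ (fun ε hε => cauchy x ε hε), ?_, ?_⟩
  · -- limits are fixed points
    intro x z hconv
    by_contra hne0
    have hβpos : 0 < d z (T z) := (hnn z (T z)).lt_of_ne (Ne.symm hne0)
    set β := d z (T z) with hβdef
    have hφβ : φ β < β := hφlt β hβpos
    set δ := min (β / 4) (β - φ β) with hδdef
    have hδpos : 0 < δ := lt_min (by linarith) (by linarith)
    have hδ1 : δ ≤ β / 4 := min_le_left _ _
    have hδ2 : δ ≤ β - φ β := min_le_right _ _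
    obtain ⟨j1, h1⟩ := Filter.eventually_atTop.1 (hconv.eventually (eventually_lt_nhds hδpos))
    obtain ⟨j2, h2⟩ := Filter.eventually_atTop.1 ((hc0 x).eventually (eventually_lt_nhds hβpos))
    set N := max j1 j2 with hNdef
    have heN : d (T^[N] x) z < δ := h1 N (le_max_left _ _)
    have heN1 : d (T^[N+1] x) z < δ := h1 (N + 1) (le_trans (le_max_left _ _) (Nat.le_succ N))
    have hcN : d (T^[N] x) (T^[N+1] x) < β := h2 N (le_max_right _ _)
    have e1 : T (T^[N] x) = T^[N+1] x := (Function.iterate_succ_apply' T N x).symm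
    have hcon := hcontr (T^[N] x) z
    rw [e1] at hcon
    have havg : (d (T^[N] x) (T z) + d (T^[N+1] x) z) / 2 < β := by
      have h3 : d (T^[N] x) (T z) ≤ d (T^[N] x) z + β := tri _ _ _
      linarith
    have hM : max (max (d (T^[N] x) z) (max (d (T^[N] x) (T^[N+1] x)) β))
        ((d (T^[N] x) (T z) + d (T^[N+1] x) z) / 2) = β := by
      apply le_antisymm
      · apply max_le
        · apply max_le (by linarith)
          exact max_le hcN.le le_rfl
        · exact havg.le
      · exact le_trans (le_max_right _ _) (le_trans (le_max_right _ _) (le_max_left _ _))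
    rw [hM] at hcon
    have hfinal : β ≤ d z (T^[N+1] x) + d (T^[N+1] x) (T z) := tri _ _ _
    have hzsym : d z (T^[N+1] x) = d (T^[N+1] x) z := hsym _ _
    linarith
  · -- uniqueness
    intro z₁ z₂ hz1 hz2
    by_contra hne0
    have hγpos : 0 < d z₁ z₂ := (hnn z₁ z₂).lt_of_ne (Ne.symm hne0)
    set γ := d z₁ z₂ with hγdef
    have hcon := hcontr z₁ z₂
    have hb1 : d z₁ (T z₂) ≤ γ := by
      have := tri z₁ z₂ (T z₂)
      linarith [hz2.le, hz2.ge]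
    have hb2 : d (T z₁) z₂ ≤ γ := by
      have h3 := tri (T z₁) z₁ z₂
      have h4 : d (T z₁) z₁ = d z₁ (T z₁) := hsym _ _
      rw [h4, hz1] at h3
      linarith
    have hM : max (max γ (max (d z₁ (T z₁)) (d z₂ (T z₂))))
        ((d z₁ (T z₂) + d (T z₁) z₂) / 2) = γ := by
      apply le_antisymm
      · apply max_le
        · apply max_le le_rfl
          rw [hz1, hz2]
          exact max_le hγpos.le hγpos.le
        · linarith
      · exact le_trans (le_max_left _ _) (le_max_left _ _)
    rw [hM] at hcon
    have hlow : γ ≤ d (T z₁) (T z₂) := by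
      have h5 := tri z₁ (T z₁) z₂
      have h6 := tri (T z₁) (T z₂) z₂
      have h7 : d (T z₂) z₂ = d z₂ (T z₂) := hsym _ _
      rw [hz1] at h5
      rw [h7, hz2] at h6
      linarith
    have := hφlt γ hγpos
    linarith
end

section
/- Let (X,d) be a symmetric space where d is triangular and (X,d) is 0-complete. Suppose T : X → X satisfies d(Tx,Ty) ≤ φ(M2(x,y)) for all x,y ∈ X, where M2(x,y) := max{d(x,y), d(x,Tx), d(y,Ty)} and φ : [0,∞) → [0,∞) is a nearly right admissible asymptotic normal function. Then T is a global Picard operator (modulo d): for every x ∈ X the sequence (T^n x) 0d-converges and each of its 0d-limits z satisfies d(z,Tz) = 0; moreover Fix(T;d) := {z ∈ X : d(z,Tz) = 0} is a d-singleton. -/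
open Filter Set Topology

theorem stmt_17 {X : Type*}
    (d : X → X → ℝ)
    (hnn : ∀ x y, 0 ≤ d x y)
    (hsym : ∀ x y, d x y = d y x)
    (htri : ∀ x y z, d x z ≤ d x y + d y z)
    (hcomp : ∀ x : ℕ → X,
      (∀ ε > 0, ∃ j : ℕ, ∀ m n : ℕ, j ≤ m → m < n → d (x m) (x n) < ε) →
      ∃ z : X, Filter.Tendsto (fun n => d (x n) z) Filter.atTop (nhds 0))
    (T : X → X)
    (φ : ℝ → ℝ)
    (hφnn : ∀ t : ℝ, 0 ≤ t → 0 ≤ φ t)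
    (hφ0 : φ 0 = 0)
    (hφlt : ∀ t : ℝ, 0 < t → φ t < t)
    (hφasym : ∀ r : ℕ → ℝ, (∀ n, 0 ≤ r n) → (∀ n, r (n + 1) ≤ φ (r n)) →
      Filter.Tendsto r Filter.atTop (nhds 0))
    (hadm : ∃ Q : Set ℝ, Q.Countable ∧ ∀ s : ℝ, 0 < s → s ∉ Q →
      max (Filter.limsup φ (nhdsWithin s (Set.Ioi s))) (φ s) < s)
    (hcontr : ∀ x y, d (T x) (T y) ≤ φ (max (d x y) (max (d x (T x)) (d y (T y)))))
    :
    (∀ x : X, ∃ z : X, Filter.Tendsto (fun n => d (T^[n] x) z) Filter.atTop (nhds 0)) ∧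
    (∀ x z : X, Filter.Tendsto (fun n => d (T^[n] x) z) Filter.atTop (nhds 0) →
      d z (T z) = 0) ∧
    (∀ z₁ z₂ : X, d z₁ (T z₁) = 0 → d z₂ (T z₂) = 0 → d z₁ z₂ = 0) := by
  classical
  -- Step A: successive distances satisfy r(n+1) ≤ φ(r n)
  have hA : ∀ (x : X) (n : ℕ),
      d (T^[n+1] x) (T^[n+1+1] x) ≤ φ (d (T^[n] x) (T^[n+1] x)) := by
    intro x n
    have h1 := hcontr (T^[n] x) (T^[n+1] x)
    rw [← Function.iterate_succ_apply' T n x, ← Function.iterate_succ_apply' T (n+1) x] at h1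
    set a := d (T^[n] x) (T^[n+1] x) with ha
    set b := d (T^[n+1] x) (T^[n+1+1] x) with hb
    -- h1 : b ≤ φ (max a (max a b))
    rcases le_or_gt b a with h | h
    · rwa [max_eq_left h, max_self a] at h1
    · have hb0 : 0 < b := lt_of_le_of_lt (hnn _ _) h
      rw [max_eq_right h.le, max_eq_right h.le] at h1
      exact absurd h1 (not_le.2 (hφlt b hb0))
  have hr0 : ∀ x : X,
      Tendsto (fun n => d (T^[n] x) (T^[n+1] x)) atTop (nhds 0) := by
    intro x
    exact hφasym _ (fun n => hnn _ _) (fun n => hA x n)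
  -- Step B: every orbit is 0d-Cauchy
  have hCauchy : ∀ x : X, ∀ ε₀ : ℝ, 0 < ε₀ →
      ∃ j : ℕ, ∀ m n : ℕ, j ≤ m → m < n → d (T^[m] x) (T^[n] x) < ε₀ := by
    intro x ε₀ hε₀
    by_contra hcon
    push_neg at hcon
    obtain ⟨Q, hQc, hQ⟩ := hadm
    obtain ⟨ε, hεQ, hεo⟩ :=
      (hQc.dense_compl ℝ).exists_mem_open isOpen_Ioo (Set.nonempty_Ioo.2 hε₀)
    obtain ⟨hε, hεε₀⟩ := hεo
    have hM := hQ ε hε hεQ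
    set M := max (limsup φ (𝓝[>] ε)) (φ ε) with hMdef
    set c := (M + ε) / 2 with hcdef
    have hM0 : 0 ≤ M := le_trans (hφnn ε hε.le) (le_max_right _ _)
    have hMc : M < c := by rw [hcdef]; linarith
    have hcε : c < ε := by rw [hcdef]; linarith
    -- eventual bound on φ to the right of ε
    have hbound : ∀ᶠ t in 𝓝[>] ε, φ t < c := by
      refine eventually_lt_of_limsup_lt (lt_of_le_of_lt (le_max_left _ _) hMc) ?_
      refine ⟨ε + 1, ?_⟩
      rw [eventually_map]
      filter_upwards [Ioo_mem_nhdsGT_of_mem (show ε ∈ Ico ε (ε+1) by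
        exact ⟨le_refl ε, by linarith⟩)] with t ht
      exact le_of_lt (lt_trans (hφlt t (lt_trans hε ht.1)) ht.2)
    obtain ⟨u, hu, hIoo⟩ := mem_nhdsGT_iff_exists_Ioo_subset.1 hbound
    have huε : ε < u := hu
    set η := min (min ((ε - c)/2) (u - ε)) ε with hηdef
    have hη : 0 < η := by
      refine lt_min (lt_min (by linarith) (by linarith)) hε
    have hη1 : η ≤ (ε - c)/2 := le_trans (min_le_left _ _) (min_le_left _ _)
    have hη2 : η ≤ u - ε := le_trans (min_le_left _ _) (min_le_right _ _)
    have hη3 : η ≤ ε := min_le_right _ _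
    obtain ⟨K, hK⟩ := Filter.eventually_atTop.1 ((hr0 x).eventually (gt_mem_nhds hη))
    obtain ⟨m, n₀, hmK, hmn₀, hd₀⟩ := hcon K
    have hdn₀ : ε ≤ d (T^[m] x) (T^[n₀] x) := le_trans (le_of_lt hεε₀) hd₀
    have hex : ∃ n : ℕ, m < n ∧ ε ≤ d (T^[m] x) (T^[n] x) := ⟨n₀, hmn₀, hdn₀⟩
    obtain ⟨N, ⟨hmN, hdN⟩, hNmin⟩ :
        ∃ N : ℕ, (m < N ∧ ε ≤ d (T^[m] x) (T^[N] x)) ∧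
          ∀ k, k < N → ¬(m < k ∧ ε ≤ d (T^[m] x) (T^[k] x)) :=
      ⟨Nat.find hex, Nat.find_spec hex, fun k hk => Nat.find_min hex hk⟩
    -- N ≠ m+1
    have hNne : N ≠ m + 1 := by
      intro h
      rw [h] at hdN
      have := hK m hmK
      linarith [le_trans hη3 (le_of_lt (lt_of_le_of_lt hdN this))]
    have hNge : m + 2 ≤ N := by omega
    obtain ⟨p, rfl⟩ : ∃ p, N = p + 1 := ⟨N - 1, by omega⟩
    have hpm : m < p := by omega
    have hpK : K ≤ p := le_trans hmK hpm.le
    have hdp : d (T^[m] x) (T^[p] x) < ε := by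
      by_contra h
      push_neg at h
      exact hNmin p (by omega) ⟨hpm, h⟩
    set s := d (T^[m] x) (T^[p+1] x) with hsdef
    have hεs : ε ≤ s := hdN
    have hsu : s < u := by
      have h1 : s ≤ d (T^[m] x) (T^[p] x) + d (T^[p] x) (T^[p+1] x) := htri _ _ _
      have h2 : d (T^[p] x) (T^[p+1] x) < η := hK p hpK
      linarith
    have hφs : φ s < c := by
      rcases eq_or_lt_of_le hεs with h | h
      · rw [← h]
        exact lt_of_le_of_lt (le_max_right _ _) hMc
      · exact hIoo ⟨h, hsu⟩
    -- main contraction estimate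
    have hrm : d (T^[m] x) (T^[m+1] x) < η := hK m hmK
    have hrp1 : d (T^[p+1] x) (T^[p+1+1] x) < η := hK (p+1) (by omega)
    have hcmain : d (T^[m+1] x) (T^[p+1+1] x) ≤ φ s := by
      have h1 := hcontr (T^[m] x) (T^[p+1] x)
      rw [← Function.iterate_succ_apply' T m x, ← Function.iterate_succ_apply' T (p+1) x] at h1
      have hmax : max s (max (d (T^[m] x) (T^[m+1] x)) (d (T^[p+1] x) (T^[p+1+1] x))) = s := by
        apply max_eq_left
        apply max_le <;> linarith
      rwa [hmax] at h1
    have hchain : s ≤ d (T^[m] x) (T^[m+1] x) + d (T^[m+1] x) (T^[p+1+1] x)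
        + d (T^[p+1] x) (T^[p+1+1] x) := by
      have h1 : s ≤ d (T^[m] x) (T^[m+1] x) + d (T^[m+1] x) (T^[p+1] x) := htri _ _ _
      have h2 : d (T^[m+1] x) (T^[p+1] x) ≤ d (T^[m+1] x) (T^[p+1+1] x)
          + d (T^[p+1+1] x) (T^[p+1] x) := htri _ _ _
      have h3 : d (T^[p+1+1] x) (T^[p+1] x) = d (T^[p+1] x) (T^[p+1+1] x) := hsym _ _
      linarith
    linarith
  refine ⟨?_, ?_, ?_⟩
  · intro x
    exact hcomp (fun n => T^[n] x) (fun ε hε => hCauchy x ε hε)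
  · intro x z hz
    by_contra haz
    have ha : 0 < d z (T z) := lt_of_le_of_ne (hnn _ _) (Ne.symm haz)
    have hφa : φ (d z (T z)) < d z (T z) := hφlt _ ha
    have h1 : ∀ᶠ n in atTop, d (T^[n] x) z < min (d z (T z)) (d z (T z) - φ (d z (T z))) :=
      hz.eventually (gt_mem_nhds (lt_min ha (by linarith)))
    have h2 : ∀ᶠ n in atTop, d (T^[n] x) (T^[n+1] x) < d z (T z) :=
      (hr0 x).eventually (gt_mem_nhds ha)
    obtain ⟨K₁, hK₁⟩ := Filter.eventually_atTop.1 h1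
    obtain ⟨K₂, hK₂⟩ := Filter.eventually_atTop.1 h2
    set n := max K₁ K₂ with hndef
    have hn1 := hK₁ n (le_max_left _ _)
    have hn2 := hK₂ n (le_max_right _ _)
    have hn3 := hK₁ (n+1) (le_trans (le_max_left _ _) (Nat.le_succ n))
    have hc := hcontr (T^[n] x) z
    rw [← Function.iterate_succ_apply' T n x] at hc
    have hmax : max (d (T^[n] x) z) (max (d (T^[n] x) (T^[n+1] x)) (d z (T z)))
        = d z (T z) := by
      rw [max_eq_right (le_of_lt hn2)]
      exact max_eq_right (le_of_lt (lt_of_lt_of_le hn1 (min_le_left _ _)))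
    rw [hmax] at hc
    have htz : d z (T z) ≤ d z (T^[n+1] x) + d (T^[n+1] x) (T z) := htri _ _ _
    have hzn : d z (T^[n+1] x) = d (T^[n+1] x) z := hsym _ _
    have hn3' : d (T^[n+1] x) z < d z (T z) - φ (d z (T z)) :=
      lt_of_lt_of_le hn3 (min_le_right _ _)
    linarith
  · intro z₁ z₂ h1 h2
    by_contra hne
    have hpos : 0 < d z₁ z₂ := lt_of_le_of_ne (hnn _ _) (Ne.symm hne)
    have h3 := hcontr z₁ z₂
    rw [h1, h2] at h3
    have hmax : max (d z₁ z₂) (max (0:ℝ) 0) = d z₁ z₂ := by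
      rw [max_self]
      exact max_eq_left (hnn _ _)
    rw [hmax] at h3
    have h4 : d z₁ z₂ ≤ d z₁ (T z₁) + d (T z₁) z₂ := htri _ _ _
    have h5 : d (T z₁) z₂ ≤ d (T z₁) (T z₂) + d (T z₂) z₂ := htri _ _ _
    have h6 : d (T z₂) z₂ = d z₂ (T z₂) := hsym _ _
    have h7 : φ (d z₁ z₂) < d z₁ z₂ := hφlt _ hpos
    linarith
end
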